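/- Let m, k, l be natural numbers with k + l < m − 1, and let C_{j,h}(m,k,l) be the coefficients of the dual constrained Bernstein basis in the Bernstein basis, extended by the convention C_{j,h} := 0 whenever j ∉ {k+1,…,m−l−1} or h ∉ {k+1,…,m−l−1}. Define A(u) := (u−m)(u−k)(u+k+2)/(u+1) and B(u) := u(u−m−l−2)(u−m+l)/(u−m−1). Then for all j with k+1 ≤ j ≤ m−l−2 and all h with k+1 ≤ h ≤ m−l−1, A(j)·C_{j+1,h} = 2(j−h)(j+h−m)·C_{j,h} + B(h)·C_{j,h−1} + A(h)·C_{j,h+1} − B(j)·C_{j−1,h}. -/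

import Mathlib

/-!
On the index set `I = {k+1, …, m-l-1}` the coefficient matrix `C` is the inverse of the Gram
matrix `G` of the Bernstein polynomials `Bᵐᵢ`, `i ∈ I`, whose entries are Beta integrals. The
tridiagonal matrix `T` with `T x (x+1) = A x`, `T x (x-1) = B x` and `T x x = 2x(m-x)` satisfies
`G T = Tᵀ G`; truncating `T` to `I` is harmless because `A k = B (m-l) = 0`. Hence `T C = C Tᵀ`,
and the `(j, h)` entry of this identity is the recurrence.
-/

open Finset intervalIntegral Polynomial
open scoped Matrix

open Nat in
noncomputable def betaNat (a b : ℕ) : ℝ := a ! * b ! / (a + b + 1)!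

theorem integral_pow_mul_one_sub_pow (a b : ℕ) :
    ∫ u in (0:ℝ)..1, u ^ a * (1 - u) ^ b = betaNat a b := by
  have hpos : ∀ n : ℕ, 0 < ((n : ℂ) + 1).re := fun n => by
    simp only [Complex.add_re, Complex.natCast_re, Complex.one_re]; positivity
  have h := Complex.betaIntegral_eq_Gamma_mul_div _ _ (hpos a) (hpos b)
  rw [show (a : ℂ) + 1 + (b + 1) = ((a + b + 1 : ℕ) : ℂ) + 1 by push_cast; ring,
    Complex.Gamma_nat_eq_factorial, Complex.Gamma_nat_eq_factorial,
    Complex.Gamma_nat_eq_factorial, Complex.betaIntegral] at h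
  simp only [add_sub_cancel_right, Complex.cpow_natCast] at h
  apply Complex.ofReal_injective
  rw [← intervalIntegral.integral_ofReal, betaNat]
  push_cast
  exact h

theorem betaNat_succ_left (a b : ℕ) :
    ((b : ℝ) + 1) * betaNat (a + 1) b = ((a : ℝ) + 1) * betaNat a (b + 1) := by
  simp only [betaNat, show a + 1 + b + 1 = a + (b + 1) + 1 by ring, Nat.factorial_succ]
  push_cast
  ring

theorem sub_mul_betaNat_succ {n t : ℕ} (ht : t < n) :
    ((n : ℝ) - t) * betaNat (t + 1) (n - (t + 1)) = ((t : ℝ) + 1) * betaNat t (n - t) := by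
  have h := betaNat_succ_left t (n - (t + 1))
  rwa [show n - (t + 1) + 1 = n - t by omega, Nat.cast_sub ht, Nat.cast_add_one,
    show (n : ℝ) - (t + 1) + 1 = n - t by ring] at h

noncomputable def bernsteinGram (m i j : ℕ) : ℝ :=
  m.choose i * m.choose j * betaNat (i + j) (2 * m - (i + j))

theorem bernsteinGram_comm (m i j : ℕ) : bernsteinGram m i j = bernsteinGram m j i := by
  simp only [bernsteinGram, add_comm i j]
  ring

theorem integral_bernsteinPolynomial_mul {m i j : ℕ} (hi : i ≤ m) (hj : j ≤ m) :
    ∫ u in (0:ℝ)..1, (bernsteinPolynomial ℝ m i).eval u * (bernsteinPolynomial ℝ m j).eval u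
      = bernsteinGram m i j := by
  have hprod : ∀ u : ℝ,
      (bernsteinPolynomial ℝ m i).eval u * (bernsteinPolynomial ℝ m j).eval u
        = (m.choose i * m.choose j : ℝ) * (u ^ (i + j) * (1 - u) ^ (2 * m - (i + j))) := by
    intro u
    rw [show 2 * m - (i + j) = (m - i) + (m - j) by omega]
    simp only [bernsteinPolynomial, eval_mul, eval_pow, eval_sub, eval_one, eval_X,
      eval_natCast]
    ring
  simp_rw [hprod, intervalIntegral.integral_const_mul, integral_pow_mul_one_sub_pow,
    bernsteinGram]

theorem integral_sum_smul_bernsteinPolynomial_mul {m j : ℕ} {I : Finset ℕ}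
    (hI : ∀ i ∈ I, i ≤ m) (hj : j ≤ m) (c : ℕ → ℝ) :
    ∫ u in (0:ℝ)..1, (∑ i ∈ I, c i • bernsteinPolynomial ℝ m i).eval u
        * (bernsteinPolynomial ℝ m j).eval u
      = ∑ i ∈ I, c i * bernsteinGram m i j := by
  simp_rw [eval_finsetSum, eval_smul, smul_eq_mul, Finset.sum_mul, mul_assoc]
  rw [intervalIntegral.integral_finsetSum fun i _ =>
    (by fun_prop : Continuous _).intervalIntegrable _ _]
  refine Finset.sum_congr rfl fun i hi => ?_
  rw [intervalIntegral.integral_const_mul, integral_bernsteinPolynomial_mul (hI i hi) hj]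

section Tridiag

variable {R : Type*} [Semiring R]

def tridiag (a b d : ℕ → R) (x y : ℕ) : R :=
  (if y = x + 1 then a x else 0) + (if y + 1 = x then b x else 0) + (if y = x then d x else 0)

theorem tridiag_swap (a b d : ℕ → R) (x y : ℕ) :
    tridiag a b d x y = tridiag (fun z => b (z + 1)) (fun z => a (z - 1)) d y x := by
  unfold tridiag
  split_ifs <;> first | rfl | omega | (subst_vars; simp)

theorem sum_tridiag_mul (a b d v : ℕ → R) {I : Finset ℕ} {x : ℕ} (hx : x ∈ I)
    (hx1 : 1 ≤ x) (hsucc : x + 1 ∉ I → a x * v (x + 1) = 0)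
    (hpred : x - 1 ∉ I → b x * v (x - 1) = 0) :
    ∑ i ∈ I, tridiag a b d x i * v i = a x * v (x + 1) + b x * v (x - 1) + d x * v x := by
  have hpred_iff : ∀ i, i + 1 = x ↔ i = x - 1 := by omega
  simp only [tridiag, add_mul, ite_mul, zero_mul, hpred_iff, sum_add_distrib, sum_ite_eq',
    if_pos hx]
  split_ifs with h1 h2 h2
  · rfl
  · rw [hpred h2]
  · rw [hsucc h1]
  · rw [hsucc h1, hpred h2]

end Tridiag

def finsetMatrix {α R : Type*} (I : Finset α) (f : α → α → R) : Matrix I I R :=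
  Matrix.of fun p q => f p q

theorem finsetMatrix_mul_apply {α R : Type*} [NonUnitalNonAssocSemiring R] (I : Finset α)
    (f g : α → α → R) (p q : I) :
    (finsetMatrix I f * finsetMatrix I g) p q = ∑ i ∈ I, f p i * g i q :=
  Finset.sum_coe_sort I fun i => f p i * g i q

theorem finsetMatrix_transpose {α R : Type*} (I : Finset α) (f : α → α → R) :
    (finsetMatrix I f)ᵀ = finsetMatrix I fun x y => f y x :=
  rfl

theorem Matrix.mul_eq_mul_transpose_of_mul_eq_one {n R : Type*} [Fintype n] [DecidableEq n]
    [CommRing R] {C G T : Matrix n n R} (hCG : C * G = 1) (hGT : G * T = Tᵀ * G) :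
    T * C = C * Tᵀ :=
  calc T * C = C * (G * T) * C := by rw [← Matrix.mul_assoc, hCG, Matrix.one_mul]
    _ = C * Tᵀ * (G * C) := by rw [hGT]; simp only [Matrix.mul_assoc]
    _ = C * Tᵀ := by rw [mul_eq_one_comm.mp hCG, Matrix.mul_one]

theorem finsetMatrix_coeff_mul_bernsteinGram {m : ℕ} {I : Finset ℕ} (hI : ∀ i ∈ I, i ≤ m)
    {D : ℕ → ℝ[X]} {C : ℕ → ℕ → ℝ}
    (hdual : ∀ j ∈ I, ∀ h ∈ I,
      (∫ u in (0:ℝ)..1, (D j).eval u * (bernsteinPolynomial ℝ m h).eval u)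
        = if j = h then 1 else 0)
    (hC : ∀ j ∈ I, D j = ∑ h ∈ I, C j h • bernsteinPolynomial ℝ m h) :
    finsetMatrix I C * finsetMatrix I (bernsteinGram m) = 1 := by
  ext p q
  rw [finsetMatrix_mul_apply, ← integral_sum_smul_bernsteinPolynomial_mul hI (hI q q.2),
    ← hC p p.2, hdual p p.2 q q.2, Matrix.one_apply]
  exact if_congr Subtype.ext_iff.symm rfl rfl

theorem cast_choose_succ_mul {m n : ℕ} (hn : n < m) :
    (m.choose (n + 1) : ℝ) * (n + 1) = m.choose n * (m - n) := by
  have h := congrArg (Nat.cast : ℕ → ℝ) (Nat.choose_succ_right_eq m n)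
  push_cast [Nat.cast_sub hn.le] at h
  exact h

noncomputable def dualA (m k : ℕ) (u : ℝ) : ℝ := (u - m) * (u - k) * (u + k + 2) / (u + 1)

noncomputable def dualB (m l : ℕ) (u : ℝ) : ℝ :=
  u * (u - m - l - 2) * (u - m + l) / (u - m - 1)

theorem dualA_self (m k : ℕ) : dualA m k k = 0 := by
  simp [dualA]

theorem dualB_sub_self {m l : ℕ} (hlm : l ≤ m) : dualB m l (m - l : ℕ) = 0 := by
  simp [dualB, Nat.cast_sub hlm]

theorem dualA_mul_choose {m n : ℕ} (k : ℕ) (hn : n < m) :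
    dualA m k n * m.choose n = -(((n : ℝ) + 1) ^ 2 - ((k : ℝ) + 1) ^ 2) * m.choose (n + 1) := by
  have hmn : (m : ℝ) - n ≠ 0 := sub_ne_zero.mpr (by exact_mod_cast hn.ne')
  rw [dualA, div_mul_eq_mul_div, div_eq_iff (by positivity)]
  apply mul_left_cancel₀ hmn
  linear_combination ((m : ℝ) - n) * (n - k) * (n + k + 2) * cast_choose_succ_mul hn

theorem dualB_mul_choose {m n : ℕ} (l : ℕ) (hn : n < m) :
    dualB m l (n + 1 : ℕ) * m.choose (n + 1)
      = -(((n : ℝ) - m) ^ 2 - ((l : ℝ) + 1) ^ 2) * m.choose n := by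
  have hmn : (n : ℝ) - m ≠ 0 := sub_ne_zero.mpr (by exact_mod_cast hn.ne)
  push_cast
  rw [dualB, div_mul_eq_mul_div, div_eq_iff (by convert hmn using 1; ring)]
  linear_combination ((n : ℝ) - m - l - 1) * (n + 1 - m + l) * cast_choose_succ_mul hn

/-- `A n · C(m,n)` and `B (n+1) · C(m,n+1)` are polynomial multiples of `C(m,n+1)` and `C(m,n)`,
so each side is `C(m,p) C(m,q)` times a combination of `β(s-1), β(s), β(s+1)`, `s = p + q`; the
antisymmetric part of that combination is a multiple of the Beta recurrence. -/
theorem bernsteinGram_tridiag_symm {m p q : ℕ} (k l : ℕ) (hp : 1 ≤ p) (hpm : p < m)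
    (hq : 1 ≤ q) (hqm : q < m) :
    dualB m l (q + 1 : ℕ) * bernsteinGram m p (q + 1)
        + dualA m k (q - 1 : ℕ) * bernsteinGram m p (q - 1)
        + 2 * q * (m - q) * bernsteinGram m p q
      = dualB m l (p + 1 : ℕ) * bernsteinGram m (p + 1) q
        + dualA m k (p - 1 : ℕ) * bernsteinGram m (p - 1) q
        + 2 * p * (m - p) * bernsteinGram m p q := by
  conv_rhs => rw [bernsteinGram_comm m (p + 1), bernsteinGram_comm m (p - 1),
    bernsteinGram_comm m p]
  set F : ℕ → ℝ := fun s => betaNat s (2 * m - s) with hF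
  have expand : ∀ i n, n + 1 < m →
      dualB m l (n + 1 + 1 : ℕ) * bernsteinGram m i (n + 1 + 1)
          + dualA m k (n + 1 - 1 : ℕ) * bernsteinGram m i (n + 1 - 1)
          + 2 * (n + 1 : ℕ) * (m - (n + 1 : ℕ)) * bernsteinGram m i (n + 1)
        = m.choose i * m.choose (n + 1) * (-(((n : ℝ) + 1 - m) ^ 2 - ((l : ℝ) + 1) ^ 2)
            * F (i + n + 2) - (((n : ℝ) + 1) ^ 2 - ((k : ℝ) + 1) ^ 2) * F (i + n)
            + 2 * ((n : ℝ) + 1) * (m - n - 1) * F (i + n + 1)) := by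
    intro i n hn
    simp only [bernsteinGram, Nat.add_sub_cancel, hF, ← add_assoc,
      show i + n + 1 + 1 = i + n + 2 by ring]
    have hB := dualB_mul_choose l hn
    have hA := dualA_mul_choose (m := m) (n := n) k (by omega)
    push_cast at hB hA ⊢
    linear_combination (m.choose i * F (i + n + 2)) * hB + (m.choose i * F (i + n)) * hA
  obtain ⟨a, rfl⟩ : ∃ a, p = a + 1 := ⟨p - 1, by omega⟩
  obtain ⟨b, rfl⟩ : ∃ b, q = b + 1 := ⟨q - 1, by omega⟩
  rw [expand _ _ hqm, expand _ _ hpm, show b + 1 + a = a + 1 + b by ring]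
  have r1 := sub_mul_betaNat_succ (n := 2 * m) (t := a + 1 + b + 1) (by omega)
  have r2 := sub_mul_betaNat_succ (n := 2 * m) (t := a + 1 + b) (by omega)
  simp only [hF, show a + 1 + b + 2 = a + 1 + b + 1 + 1 by ring] at r1 r2 ⊢
  push_cast at r1 r2 ⊢
  linear_combination (m.choose (a + 1) * m.choose (b + 1) * ((b : ℝ) - a)) * (r1 + r2)

noncomputable def dualTridiag (m k l : ℕ) : ℕ → ℕ → ℝ :=
  tridiag (fun x => dualA m k x) (fun x => dualB m l x) (fun x => 2 * x * (m - x))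

def dualIndices (m k l : ℕ) : Finset ℕ := Icc (k + 1) (m - l - 1)

theorem finsetMatrix_bernsteinGram_mul_dualTridiag {m k l : ℕ} (hklm : k + l + 1 < m) :
    finsetMatrix (dualIndices m k l) (bernsteinGram m)
        * finsetMatrix (dualIndices m k l) (dualTridiag m k l)
      = (finsetMatrix (dualIndices m k l) (dualTridiag m k l))ᵀ
        * finsetMatrix (dualIndices m k l) (bernsteinGram m) := by
  have mem : ∀ x, x ∈ dualIndices m k l ↔ k + 1 ≤ x ∧ x ≤ m - l - 1 := fun x => mem_Icc
  have hsucc : ∀ x ∈ dualIndices m k l, x + 1 ∉ dualIndices m k l →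
      dualB m l (x + 1 : ℕ) = 0 :=
    fun x hx hx' => by
      rw [show x + 1 = m - l by grind]
      exact dualB_sub_self (by omega)
  have hpred : ∀ x ∈ dualIndices m k l, x - 1 ∉ dualIndices m k l →
      dualA m k (x - 1 : ℕ) = 0 :=
    fun x hx hx' => by
      rw [show x - 1 = k by grind]
      exact dualA_self m k
  ext ⟨p, hp⟩ ⟨q, hq⟩
  obtain ⟨hp1, hp2⟩ := (mem p).1 hp
  obtain ⟨hq1, hq2⟩ := (mem q).1 hq
  rw [finsetMatrix_transpose, finsetMatrix_mul_apply, finsetMatrix_mul_apply]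
  simp only [dualTridiag, tridiag_swap _ _ _ _ p, tridiag_swap _ _ _ _ q,
    mul_comm (bernsteinGram m p _)]
  rw [sum_tridiag_mul _ _ _ _ hq (by omega) (fun h => by rw [hsucc q hq h, zero_mul])
      (fun h => by rw [hpred q hq h, zero_mul]),
    sum_tridiag_mul _ _ _ _ hp (by omega) (fun h => by rw [hsucc p hp h, zero_mul])
      (fun h => by rw [hpred p hp h, zero_mul])]
  exact bernsteinGram_tridiag_symm k l (by omega) (by omega) (by omega) (by omega)

theorem dual_basis_coeff_recurrence_general (m k l : ℕ) (hklm : k + l + 1 < m)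
    (D : ℕ → Polynomial ℝ) (C : ℕ → ℕ → ℝ)
    (hdual : ∀ j ∈ Finset.Icc (k + 1) (m - l - 1), ∀ h ∈ Finset.Icc (k + 1) (m - l - 1),
      (∫ u in (0:ℝ)..1, (D j).eval u * (bernsteinPolynomial ℝ m h).eval u)
        = if j = h then 1 else 0)
    (hC : ∀ j ∈ Finset.Icc (k + 1) (m - l - 1),
      D j = ∑ h ∈ Finset.Icc (k + 1) (m - l - 1), C j h • bernsteinPolynomial ℝ m h)
    (hC0 : ∀ j h : ℕ, j ∉ Finset.Icc (k + 1) (m - l - 1) ∨ h ∉ Finset.Icc (k + 1) (m - l - 1) →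
      C j h = 0)
    (A B : ℝ → ℝ)
    (hA : ∀ u : ℝ, A u = (u - m) * (u - k) * (u + k + 2) / (u + 1))
    (hB : ∀ u : ℝ, B u = u * (u - m - l - 2) * (u - m + l) / (u - m - 1)) :
    ∀ j h : ℕ, k + 1 ≤ j → j ≤ m - l - 2 → k + 1 ≤ h → h ≤ m - l - 1 →
      A j * C (j + 1) h
        = 2 * ((j : ℝ) - h) * ((j : ℝ) + h - m) * C j h
            + B h * C j (h - 1) + A h * C j (h + 1) - B j * C (j - 1) h := by
  intro j h hj1 hj2 hh1 hh2
  obtain rfl : A = dualA m k := funext hA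
  obtain rfl : B = dualB m l := funext hB
  have hCG : finsetMatrix (dualIndices m k l) C * finsetMatrix _ (bernsteinGram m) = 1 :=
    finsetMatrix_coeff_mul_bernsteinGram (fun i hi => by have := mem_Icc.1 hi; omega) hdual hC
  have hj : j ∈ dualIndices m k l := mem_Icc.2 ⟨hj1, by omega⟩
  have hh : h ∈ dualIndices m k l := mem_Icc.2 ⟨hh1, hh2⟩
  have hTC := congr_fun₂ (Matrix.mul_eq_mul_transpose_of_mul_eq_one hCG
    (finsetMatrix_bernsteinGram_mul_dualTridiag hklm)) ⟨j, hj⟩ ⟨h, hh⟩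
  rw [finsetMatrix_transpose, finsetMatrix_mul_apply, finsetMatrix_mul_apply] at hTC
  simp only [dualTridiag, mul_comm (C j _)] at hTC
  rw [sum_tridiag_mul _ _ _ _ hj (by omega)
      (fun hj' => absurd (mem_Icc.2 ⟨by omega, by omega⟩) hj')
      (fun hj' => by rw [hC0 _ _ (.inl hj'), mul_zero]),
    sum_tridiag_mul _ _ _ _ hh (by omega) (fun hh' => by rw [hC0 _ _ (.inr hh'), mul_zero])
      (fun hh' => by rw [hC0 _ _ (.inr hh'), mul_zero])] at hTC
  linear_combination hTC

theorem dual_basis_coeff_recurrence (m k l : ℕ) (hklm : k + l + 1 < m)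
    (D : ℕ → Polynomial ℝ) (C : ℕ → ℕ → ℝ)
    (hmem : ∀ j ∈ Finset.Icc (k + 1) (m - l - 1),
      D j ∈ Submodule.span ℝ
        ((fun i => bernsteinPolynomial ℝ m i) '' Set.Icc (k + 1) (m - l - 1)))
    (hdual : ∀ j ∈ Finset.Icc (k + 1) (m - l - 1), ∀ h ∈ Finset.Icc (k + 1) (m - l - 1),
      (∫ u in (0:ℝ)..1, (D j).eval u * (bernsteinPolynomial ℝ m h).eval u)
        = if j = h then 1 else 0)
    (hC : ∀ j ∈ Finset.Icc (k + 1) (m - l - 1),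
      D j = ∑ h ∈ Finset.Icc (k + 1) (m - l - 1), C j h • bernsteinPolynomial ℝ m h)
    (hC0 : ∀ j h : ℕ, j ∉ Finset.Icc (k + 1) (m - l - 1) ∨ h ∉ Finset.Icc (k + 1) (m - l - 1) →
      C j h = 0)
    (A B : ℝ → ℝ)
    (hA : ∀ u : ℝ, A u = (u - m) * (u - k) * (u + k + 2) / (u + 1))
    (hB : ∀ u : ℝ, B u = u * (u - m - l - 2) * (u - m + l) / (u - m - 1)) :
    ∀ j h : ℕ, k + 1 ≤ j → j ≤ m - l - 2 → k + 1 ≤ h → h ≤ m - l - 1 →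
      A j * C (j + 1) h
        = 2 * ((j : ℝ) - h) * ((j : ℝ) + h - m) * C j h
            + B h * C j (h - 1) + A h * C j (h + 1) - B j * C (j - 1) h :=
  dual_basis_coeff_recurrence_general m k l hklm D C hdual hC hC0 A B hA hB
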